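/- arXiv:1904.01217 — 2 statements merged into one kernel-verified Lean document; each statement's English description precedes it below -/
import Mathlib

section
/- Let a be a positive integer and N a positive integer, and define S₂(m) = (2m+1)²π²/(2(2a+1)). Then the sum over m from 0 to 4a+1 of (-1)^m sin((2m+1)π/(2a+1)) exp(N S₂(m)/(2πi)) equals 0. -/
open Complex

/-- `∑_{m=0}^{4a+1} (-1)^m sin((2m+1)π/(2a+1)) e^{N S₂(m)/(2πi)} = 0` where
`S₂(m) = (2m+1)²π²/(2(2a+1))`. -/
theorem stmt_5 (a N : ℕ) (ha : 1 ≤ a) (hN : 1 ≤ N) :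
    ∑ m ∈ Finset.range (4 * a + 2),
      (-1 : ℂ) ^ m * (Real.sin ((2 * m + 1) * Real.pi / (2 * a + 1)) : ℝ) *
        Complex.exp ((N : ℂ) *
          ((((2 * m + 1 : ℕ) : ℝ) ^ 2 * Real.pi ^ 2 / (2 * (2 * a + 1)) : ℝ) : ℂ) /
          (2 * Real.pi * I)) = 0 := by
  have hsplit : 4 * a + 2 = (2 * a + 1) + (2 * a + 1) := by ring
  rw [hsplit, Finset.sum_range_add, ← Finset.sum_add_distrib]
  apply Finset.sum_eq_zero
  intro m _
  have hπ : (Real.pi : ℝ) ≠ 0 := Real.pi_ne_zero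
  have h2a : ((2 * a + 1 : ℕ) : ℝ) ≠ 0 := by positivity
  have h2aR : (2 * (a:ℝ) + 1) ≠ 0 := by positivity
  -- sin part
  have hsin : Real.sin ((2 * ((2*a+1+m : ℕ):ℝ) + 1) * Real.pi / (2 * a + 1))
      = Real.sin ((2 * (m:ℝ) + 1) * Real.pi / (2 * a + 1)) := by
    have harg : (2 * ((2*a+1+m : ℕ):ℝ) + 1) * Real.pi / (2 * a + 1)
        = (2 * (m:ℝ) + 1) * Real.pi / (2 * a + 1) + 2 * Real.pi := by
      push_cast
      field_simp
      ring
    rw [harg, Real.sin_add_two_pi]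
  -- sign part
  have hsign : ((-1 : ℂ)) ^ (2*a+1+m) = -((-1:ℂ)) ^ m := by
    rw [pow_add, pow_add]
    simp [pow_mul]
  -- exp part
  have hexp : Complex.exp ((N : ℂ) *
        ((((2 * (2*a+1+m) + 1 : ℕ) : ℝ) ^ 2 * Real.pi ^ 2 / (2 * (2 * a + 1)) : ℝ) : ℂ) /
        (2 * Real.pi * I))
      = Complex.exp ((N : ℂ) *
        ((((2 * m + 1 : ℕ) : ℝ) ^ 2 * Real.pi ^ 2 / (2 * (2 * a + 1)) : ℝ) : ℂ) /
        (2 * Real.pi * I)) := by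
    have hz : (N : ℂ) *
        ((((2 * (2*a+1+m) + 1 : ℕ) : ℝ) ^ 2 * Real.pi ^ 2 / (2 * (2 * a + 1)) : ℝ) : ℂ) /
        (2 * Real.pi * I)
        = (N : ℂ) *
        ((((2 * m + 1 : ℕ) : ℝ) ^ 2 * Real.pi ^ 2 / (2 * (2 * a + 1)) : ℝ) : ℂ) /
        (2 * Real.pi * I) + ((-(N * (m + a + 1)) : ℤ) : ℂ) * (2 * Real.pi * I) := by
      have hπC : (Real.pi : ℂ) ≠ 0 := by exact_mod_cast hπ
      have h2aC : (2 * (a:ℂ) + 1) ≠ 0 := by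
        intro h
        have := congrArg Complex.re h
        simp at this
        push_cast at this
        linarith
      push_cast
      field_simp
      ring_nf
      simp only [I_sq]
      ring
    rw [hz, Complex.exp_add, Complex.exp_int_mul_two_pi_mul_I, mul_one]
  rw [hsin, hsign, hexp]
  ring
end

section
/- Let a, b be integers with 2b+1 > 4(2a+1) > 0, θ(z₁,z₂) = -z₂²/((2a+1)πi) - 4(z₁-z₂)²/((2b+1-4(2a+1))πi) + 4z₁, δ as its associated quadratic form, w₁ = (2b+1)πi/2, w₂ = 2(2a+1)πi. Then for all z₁, z₂: θ(z₁+w₁, z₂+w₂) = -δ(z₁,z₂)/(πi) + (2b+1)πi. In particular exp(N θ(z₁+w₁, z₂+w₂)) = (-1)^N exp(-N δ(z₁,z₂)/(πi)) for any integer N. -/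
open Complex

/-- `θ(z₁+w₁, z₂+w₂) = -δ(z₁,z₂)/(πi) + (2b+1)πi`, hence
`exp(Nθ(z₁+w₁,z₂+w₂)) = (-1)^N exp(-Nδ(z₁,z₂)/(πi))`. -/
theorem stmt_15 (a b : ℤ) (hab : 2 * b + 1 > 4 * (2 * a + 1)) (ha : 4 * (2 * a + 1) > 0)
    (δ : ℂ → ℂ → ℂ)
    (hδ : ∀ z₁ z₂ : ℂ, δ z₁ z₂ =
      z₂ ^ 2 / ((2 * a + 1 : ℤ) : ℂ) +
        4 * (z₁ - z₂) ^ 2 / ((2 * b + 1 - 4 * (2 * a + 1) : ℤ) : ℂ))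
    (θ : ℂ → ℂ → ℂ)
    (hθ : ∀ z₁ z₂ : ℂ, θ z₁ z₂ = -δ z₁ z₂ / (Real.pi * I) + 4 * z₁) :
    ∀ z₁ z₂ : ℂ,
      θ (z₁ + ((2 * b + 1 : ℤ) : ℂ) * Real.pi * I / 2)
          (z₂ + 2 * ((2 * a + 1 : ℤ) : ℂ) * Real.pi * I) =
        -δ z₁ z₂ / (Real.pi * I) + ((2 * b + 1 : ℤ) : ℂ) * Real.pi * I ∧
      ∀ N : ℤ,
        Complex.exp ((N : ℂ) *
            θ (z₁ + ((2 * b + 1 : ℤ) : ℂ) * Real.pi * I / 2)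
              (z₂ + 2 * ((2 * a + 1 : ℤ) : ℂ) * Real.pi * I)) =
          (-1 : ℂ) ^ N * Complex.exp (-(N : ℂ) * δ z₁ z₂ / (Real.pi * I)) := by
  intro z₁ z₂
  have hA : ((2 * a + 1 : ℤ) : ℂ) ≠ 0 := Int.cast_ne_zero.mpr (by omega)
  have hC : ((2 * b + 1 - 4 * (2 * a + 1) : ℤ) : ℂ) ≠ 0 := Int.cast_ne_zero.mpr (by omega)
  have hπ : (Real.pi : ℂ) ≠ 0 := by exact_mod_cast Real.pi_ne_zero
  have hI : (I : ℂ) ≠ 0 := I_ne_zero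
  have hCB : ((2 * b + 1 - 4 * (2 * a + 1) : ℤ) : ℂ)
      = ((2 * b + 1 : ℤ) : ℂ) - 4 * ((2 * a + 1 : ℤ) : ℂ) := by push_cast; ring
  have hshift : δ (z₁ + ((2 * b + 1 : ℤ) : ℂ) * Real.pi * I / 2)
        (z₂ + 2 * ((2 * a + 1 : ℤ) : ℂ) * Real.pi * I)
      = δ z₁ z₂ + 4 * ((Real.pi : ℂ) * I) * z₁
        + ((2 * b + 1 : ℤ) : ℂ) * ((Real.pi : ℂ) * I) ^ 2 := by
    rw [hδ, hδ]
    have hA' := hA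
    have hC' := hC
    push_cast at hA' hC' ⊢
    rw [div_add_div _ _ hA' hC', div_add_div _ _ hA' hC', div_add' _ _ _ (mul_ne_zero hA' hC'),
      div_add' _ _ _ (mul_ne_zero hA' hC'), div_left_inj' (mul_ne_zero hA' hC')]
    ring
  have key : θ (z₁ + ((2 * b + 1 : ℤ) : ℂ) * Real.pi * I / 2)
          (z₂ + 2 * ((2 * a + 1 : ℤ) : ℂ) * Real.pi * I) =
        -δ z₁ z₂ / (Real.pi * I) + ((2 * b + 1 : ℤ) : ℂ) * Real.pi * I := by
    rw [hθ, hshift]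
    field_simp
    ring
  refine ⟨key, fun N => ?_⟩
  rw [key]
  have heq : (N : ℂ) * (-δ z₁ z₂ / (Real.pi * I) + ((2 * b + 1 : ℤ) : ℂ) * Real.pi * I)
      = -(N : ℂ) * δ z₁ z₂ / (Real.pi * I) + ((N * (2 * b + 1) : ℤ) : ℂ) * ((Real.pi : ℂ) * I) := by
    push_cast; ring
  rw [heq, Complex.exp_add, mul_comm]
  congr 1
  rw [Complex.exp_int_mul, Complex.exp_pi_mul_I, zpow_mul]
  rcases Int.even_or_odd N with he | ho
  · rw [he.neg_one_zpow, one_zpow]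
  · rw [ho.neg_one_zpow]
    exact (Int.odd_iff.mpr (by omega) : Odd (2 * b + 1)).neg_one_zpow
end
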